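/- arXiv:1702.06429 — 4 statements merged into one kernel-verified Lean document; each statement's English description precedes it below -/
import Mathlib

section
/- One-step Bregman identity for dual averaging: for the dual averaging iteration with extended Bregman divergence D̃_n, for all θ ∈ X one has D̃_n(θ, η_n) − D̃_{n-1}(θ, η_{n-1}) = −D̃_{n-1}(θ_n, η_{n-1}) + γ⟨∇f(θ_{n-1}), θ_{n-1} − θ_n⟩ − γ(g(θ_n) − g(θ)) − γ⟨∇f(θ_{n-1}), θ_{n-1} − θ⟩. -/
open scoped RealInnerProductSpace

/-- One-step Bregman identity for dual averaging. -/
theorem stmt_5 {d : ℕ} (X : Set (EuclideanSpace ℝ (Fin d)))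
    (f g h : EuclideanSpace ℝ (Fin d) → ℝ)
    (f' : EuclideanSpace ℝ (Fin d) → EuclideanSpace ℝ (Fin d))
    (hfc : ConvexOn ℝ X f) (hgc : ConvexOn ℝ X g) (hhc : StrictConvexOn ℝ X h)
    (γ : ℝ) (hγ : 0 < γ) (n : ℕ) (hn : 1 ≤ n)
    (ηp ηn θp θn θ : EuclideanSpace ℝ (Fin d)) (hθ : θ ∈ X)
    (hrec : ηn = ηp - γ • f' θp)
    (hmaxp : ∀ x, ⟪ηp, x⟫ - (h x + ((n : ℝ) - 1) * γ * g x)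
        ≤ ⟪ηp, θp⟫ - (h θp + ((n : ℝ) - 1) * γ * g θp))
    (hmaxn : ∀ x, ⟪ηn, x⟫ - (h x + (n : ℝ) * γ * g x)
        ≤ ⟪ηn, θn⟫ - (h θn + (n : ℝ) * γ * g θn)) :
    ((h θ + (n : ℝ) * γ * g θ) - (h θn + (n : ℝ) * γ * g θn) - ⟪ηn, θ - θn⟫)
      - ((h θ + ((n : ℝ) - 1) * γ * g θ) - (h θp + ((n : ℝ) - 1) * γ * g θp)
          - ⟪ηp, θ - θp⟫)
    = -((h θn + ((n : ℝ) - 1) * γ * g θn) - (h θp + ((n : ℝ) - 1) * γ * g θp)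
          - ⟪ηp, θn - θp⟫)
      + γ * ⟪f' θp, θp - θn⟫ - γ * (g θn - g θ) - γ * ⟪f' θp, θp - θ⟫ := by
  subst hrec
  simp only [inner_sub_left, inner_sub_right, real_inner_smul_left]
  ring
end

section
/- If a sequence of nonnegative reals satisfies the recursion D_n ≤ (1 − γμ)D_{n-1} + γ(f(θ) − f(θ_n)) with (f(θ_n)) nonincreasing and 0 < γμ < 1, then (1 − (1−γμ)^n)/μ · (f(θ_n) − f(θ)) + D_n ≤ (1−γμ)^n D_0, and consequently f(θ_n) − f(θ) ≤ (1−γμ)^n D_0/γ. -/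
/-!
Put `q = 1 - γμ` and `a_n = (1 - qⁿ)/μ`, so that `a_{n+1} = q a_n + γ`. The Lyapunov quantity
`a_n (u_n - c) + D_n` then contracts by the factor `q` at each step: the recursion absorbs the `γ`
part of `a_{n+1}`, and monotonicity of `u` handles the remaining `q a_n` part. For `n ≥ 1` one has
`γ ≤ a_n`, and dropping `D_n ≥ 0` gives the bound on `u_n - c`.
-/

section

variable {γ μ : ℝ}

lemma one_sub_pow_div_succ (hμ : μ ≠ 0) (n : ℕ) :
    (1 - (1 - γ * μ) ^ (n + 1)) / μ = (1 - γ * μ) * ((1 - (1 - γ * μ) ^ n) / μ) + γ := by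
  field_simp
  ring

lemma one_sub_pow_div_nonneg (hγ : 0 ≤ γ) (hμ : 0 < μ) (hγμ : γ * μ ≤ 1) (n : ℕ) :
    0 ≤ (1 - (1 - γ * μ) ^ n) / μ := by
  have : (1 - γ * μ) ^ n ≤ 1 := pow_le_one₀ (by linarith) (by nlinarith)
  exact div_nonneg (by linarith) hμ.le

lemma le_one_sub_pow_div (hγ : 0 ≤ γ) (hμ : 0 < μ) (hγμ : γ * μ ≤ 1) {n : ℕ} (hn : 1 ≤ n) :
    γ ≤ (1 - (1 - γ * μ) ^ n) / μ := by
  have : (1 - γ * μ) ^ n ≤ 1 - γ * μ := by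
    simpa using pow_le_pow_of_le_one (by linarith) (by nlinarith) hn
  rw [le_div_iff₀ hμ]
  linarith

theorem lyapunov_le_pow_mul (D u : ℕ → ℝ) (c : ℝ) (hγ : 0 ≤ γ) (hμ : 0 < μ) (hγμ : γ * μ ≤ 1)
    (hu : Antitone u) (hrec : ∀ n, D (n + 1) ≤ (1 - γ * μ) * D n + γ * (c - u (n + 1)))
    (n : ℕ) :
    (1 - (1 - γ * μ) ^ n) / μ * (u n - c) + D n ≤ (1 - γ * μ) ^ n * D 0 := by
  induction n with
  | zero => simp
  | succ n ih =>
    set q := 1 - γ * μ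
    set a := (1 - q ^ n) / μ
    have hq : 0 ≤ q := by linarith
    have hu_step : q * a * u (n + 1) ≤ q * a * u n :=
      mul_le_mul_of_nonneg_left (hu n.le_succ)
        (mul_nonneg hq (one_sub_pow_div_nonneg hγ hμ hγμ n))
    rw [one_sub_pow_div_succ hμ.ne']
    calc (q * a + γ) * (u (n + 1) - c) + D (n + 1)
        ≤ (q * a + γ) * (u (n + 1) - c) + (q * D n + γ * (c - u (n + 1))) := by
          linarith [hrec n]
      _ = q * a * (u (n + 1) - c) + q * D n := by ring
      _ ≤ q * (a * (u n - c) + D n) := by linarith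
      _ ≤ q * (q ^ n * D 0) := mul_le_mul_of_nonneg_left ih hq
      _ = q ^ (n + 1) * D 0 := by ring

end

lemma le_div_of_mul_add_le {a b x d B : ℝ} (hb : 0 < b) (hba : b ≤ a) (hd : 0 ≤ d) (hB : 0 ≤ B)
    (h : a * x + d ≤ B) : x ≤ B / b := by
  rw [le_div_iff₀ hb]
  rcases le_or_gt x 0 with hx | hx
  · nlinarith
  · nlinarith [mul_le_mul_of_nonneg_right hba hx.le]

/-- Contraction recursion for Bregman-divergence sequences: from
`D_n ≤ (1−γμ)D_{n−1} + γ(f(θ) − f(θ_n))` with `(f(θ_n))` nonincreasing. -/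
theorem stmt_6 (D u : ℕ → ℝ) (c γ μ : ℝ) (hγ : 0 < γ) (hμ : 0 < μ)
    (hγμ : γ * μ < 1) (hD : ∀ n, 0 ≤ D n) (hu : Antitone u)
    (hrec : ∀ n, D (n + 1) ≤ (1 - γ * μ) * D n + γ * (c - u (n + 1))) :
    ∀ n : ℕ,
      (1 - (1 - γ * μ) ^ n) / μ * (u n - c) + D n ≤ (1 - γ * μ) ^ n * D 0
      ∧ (1 ≤ n → u n - c ≤ (1 - γ * μ) ^ n * D 0 / γ) := by
  intro n
  have hlyap := lyapunov_le_pow_mul D u c hγ.le hμ hγμ.le hu hrec n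
  refine ⟨hlyap, fun hn => ?_⟩
  have hpow : 0 ≤ (1 - γ * μ) ^ n * D 0 := mul_nonneg (pow_nonneg (by linarith) n) (hD 0)
  exact le_div_of_mul_add_le hγ (le_one_sub_pow_div hγ.le hμ hγμ.le hn) (hD n) hpow hlyap
end

section
/- ℓ_p step-size bound for least-squares: if f(θ) = ½E(⟨x,θ⟩ − y)² with E‖x‖_q² < ∞ where 1/p + 1/q = 1 and p ∈ (1,2], and h(θ) = ‖θ‖_p²/(2(p−1)), then h − γf is convex for any step-size γ ≤ 1/E‖x‖_q². -/
/-!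
Write `h θ = ‖θ‖_p² / (2(p-1))`, `f θ = ½ E(⟨x,θ⟩ - y)²` and `g = h - γ f`. Since `g` is
continuous along lines, it suffices to prove `g u ≤ (g (u+v) + g (u-v)) / 2`. For `h` this
midpoint gap is at least `‖v‖_p² / 2` by the 2-uniform convexity of `ℓ_p` (Ball–Carlen–Lieb):
`‖u‖_p² + (p-1) ‖v‖_p² ≤ (‖u+v‖_p² + ‖u-v‖_p²) / 2`. For the quadratic `f` it is exactly
`½ E⟨x,v⟩² ≤ ½ E‖x‖_q² ‖v‖_p²` by Hölder, so `γ E‖x‖_q² ≤ 1` makes the total gap nonnegative.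

The Ball–Carlen–Lieb inequality is the scalar two-point inequality
`(a² + (p-1) b²)^{p/2} ≤ (|a+b|^p + |a-b|^p) / 2`, summed over coordinates and combined with the
reverse Minkowski inequality in `ℓ_{p/2}` and the convexity of `t ↦ t^{2/p}`.
-/

open Set Matrix MeasureTheory
open scoped ENNReal

theorem IsClosed.Icc_subset_of_midpoint_mem {S : Set ℝ} (hS : IsClosed S)
    (hmid : ∀ s ∈ S, ∀ t ∈ S, (s + t) / 2 ∈ S) {a b : ℝ} (ha : a ∈ S) (hb : b ∈ S) :
    Icc a b ⊆ S := by
  have approx : ∀ n : ℕ, ∀ a ∈ S, ∀ b ∈ S, ∀ t ∈ Icc a b,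
      ∃ s ∈ S, dist t s ≤ (b - a) / 2 ^ n := by
    intro n
    induction n with
    | zero =>
      rintro a ha b - t ⟨hat, htb⟩
      exact ⟨a, ha, by rw [Real.dist_eq, abs_of_nonneg (by linarith)]; simpa using htb⟩
    | succ n ih =>
      rintro a ha b hb t ⟨hat, htb⟩
      have hm := hmid a ha b hb
      have half : ((a + b) / 2 - a) / 2 ^ n = (b - a) / 2 ^ (n + 1) := by ring
      have half' : (b - (a + b) / 2) / 2 ^ n = (b - a) / 2 ^ (n + 1) := by ring
      rcases le_total t ((a + b) / 2) with h | h
      · simpa only [half] using ih a ha _ hm t ⟨hat, h⟩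
      · simpa only [half'] using ih _ hm b hb t ⟨h, htb⟩
  intro t ht
  refine hS.closure_subset (Metric.mem_closure_iff.2 fun ε hε => ?_)
  obtain ⟨n, hn⟩ := pow_unbounded_of_one_lt ((b - a) / ε) (by norm_num : (1 : ℝ) < 2)
  obtain ⟨s, hs, hts⟩ := approx n a ha b hb t ht
  refine ⟨s, hs, hts.trans_lt ?_⟩
  rw [div_lt_iff₀ hε] at hn
  rwa [div_lt_iff₀ (by positivity), mul_comm]

theorem convexOn_univ_of_le_add_sub_div_two {E : Type*} [AddCommGroup E] [Module ℝ E]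
    {f : E → ℝ} (hcont : ∀ a v : E, Continuous fun t : ℝ => f (a + t • v))
    (hmid : ∀ u v, f u ≤ (f (u + v) + f (u - v)) / 2) : ConvexOn ℝ univ f := by
  refine ⟨convex_univ, fun a _ b _ α β hα hβ hαβ => ?_⟩
  let S := {t : ℝ | f (a + t • (b - a)) ≤ f a + t * (f b - f a)}
  have hS : IsClosed S := isClosed_le (hcont a (b - a)) (by fun_prop)
  have hSmid : ∀ s ∈ S, ∀ t ∈ S, (s + t) / 2 ∈ S := by
    intro s hs t ht
    have := hmid (a + ((s + t) / 2) • (b - a)) (((s - t) / 2) • (b - a))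
    rw [show a + ((s + t) / 2) • (b - a) + ((s - t) / 2) • (b - a) = a + s • (b - a) by module,
      show a + ((s + t) / 2) • (b - a) - ((s - t) / 2) • (b - a) = a + t • (b - a) by module]
      at this
    simp only [S, mem_ofPred_eq] at hs ht ⊢
    linarith
  have hβS : β ∈ S :=
    hS.Icc_subset_of_midpoint_mem hSmid (a := 0) (b := 1) (by simp [S]) (by simp [S])
      ⟨hβ, by linarith⟩
  obtain rfl : α = 1 - β := eq_sub_of_add_eq hαβ
  simp only [S, mem_ofPred_eq] at hβS
  rw [show (1 - β) • a + β • b = a + β • (b - a) by module, smul_eq_mul, smul_eq_mul]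
  linarith

namespace Real

theorem two_le_rpow_one_add_add_rpow_one_sub {s t : ℝ} (hs : s ≤ 0) (ht : t ∈ Ioo (-1) 1) :
    2 ≤ (1 + t) ^ s + (1 - t) ^ s := by
  obtain ⟨ht₁, ht₂⟩ := ht
  have hX := rpow_pos_of_pos (by linarith : 0 < 1 + t) s
  have hY := rpow_pos_of_pos (by linarith : 0 < 1 - t) s
  have hXY : 1 ≤ (1 + t) ^ s * (1 - t) ^ s := by
    rw [← mul_rpow (by linarith) (by linarith)]
    exact one_le_rpow_of_pos_of_le_one_of_nonpos (by nlinarith) (by nlinarith [sq_nonneg t]) hs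
  nlinarith [sq_nonneg ((1 + t) ^ s - (1 - t) ^ s)]

theorem convexOn_rpow_one_add_add_rpow_one_sub_sub_mul_sq {p : ℝ} (hp1 : 1 < p) (hp2 : p ≤ 2) :
    ConvexOn ℝ (Icc (-1) 1) fun t : ℝ => (1 + t) ^ p + (1 - t) ^ p - p * (p - 1) * t ^ 2 := by
  have hp0 : 0 ≤ p := by linarith
  refine convexOn_of_hasDerivWithinAt2_nonneg (convex_Icc _ _)
    (f' := fun t => p * (1 + t) ^ (p - 1) - p * (1 - t) ^ (p - 1) - 2 * p * (p - 1) * t)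
    (f'' := fun t => p * (p - 1) * ((1 + t) ^ (p - 2) + (1 - t) ^ (p - 2) - 2))
    ?_ ?_ ?_ ?_ <;> try rw [interior_Icc]
  · exact Continuous.continuousOn <| ((continuous_rpow_const hp0).comp (by fun_prop)).add
      ((continuous_rpow_const hp0).comp (by fun_prop)) |>.sub (by fun_prop)
  · rintro t ⟨ht₁, ht₂⟩
    have h₁ := ((hasDerivAt_id t).const_add 1).rpow_const (p := p)
      (Or.inl (by linarith : 0 < 1 + t).ne')
    have h₂ := ((hasDerivAt_id t).const_sub 1).rpow_const (p := p)
      (Or.inl (by linarith : 0 < 1 - t).ne')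
    have h₃ := (hasDerivAt_pow 2 t).const_mul (p * (p - 1))
    exact (((h₁.add h₂).sub h₃).congr_deriv
      (by simp only [id, Nat.cast_ofNat]; ring)).hasDerivWithinAt
  · rintro t ⟨ht₁, ht₂⟩
    have h₁ := ((hasDerivAt_id t).const_add 1).rpow_const (p := p - 1)
      (Or.inl (by linarith : 0 < 1 + t).ne')
    have h₂ := ((hasDerivAt_id t).const_sub 1).rpow_const (p := p - 1)
      (Or.inl (by linarith : 0 < 1 - t).ne')
    have h₃ := (hasDerivAt_id t).const_mul (2 * p * (p - 1))
    exact ((((h₁.const_mul p).sub (h₂.const_mul p)).sub h₃).congr_deriv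
      (by simp only [id]; ring_nf)).hasDerivWithinAt
  · intro t ht
    have := two_le_rpow_one_add_add_rpow_one_sub (by linarith : p - 2 ≤ 0) ht
    have : 0 ≤ p * (p - 1) := by nlinarith
    positivity

theorem two_add_mul_sq_le_rpow_one_add_add_rpow_one_sub {p t : ℝ} (hp1 : 1 < p) (hp2 : p ≤ 2)
    (ht : t ∈ Icc (-1) 1) : 2 + p * (p - 1) * t ^ 2 ≤ (1 + t) ^ p + (1 - t) ^ p := by
  -- convexity at the midpoint `0` of `t` and `-t`, where the function is even and equals `2`
  have hnt : -t ∈ Icc (-1 : ℝ) 1 := ⟨by linarith [ht.2], by linarith [ht.1]⟩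
  have := (convexOn_rpow_one_add_add_rpow_one_sub_sub_mul_sq hp1 hp2).2 ht hnt
    (by norm_num : (0 : ℝ) ≤ 1 / 2) (by norm_num : (0 : ℝ) ≤ 1 / 2) (by norm_num)
  norm_num [← sub_eq_add_neg] at this
  linarith

theorem one_add_mul_sq_rpow_le {p t : ℝ} (hp1 : 1 < p) (hp2 : p ≤ 2) (ht : t ∈ Icc (-1) 1) :
    (1 + (p - 1) * t ^ 2) ^ (p / 2) ≤ ((1 + t) ^ p + (1 - t) ^ p) / 2 := by
  have hbernoulli := rpow_one_add_le_one_add_mul_self (s := (p - 1) * t ^ 2) (p := p / 2)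
    (by nlinarith) (by linarith) (by linarith)
  nlinarith [two_add_mul_sq_le_rpow_one_add_add_rpow_one_sub hp1 hp2 ht]

theorem sq_rpow_div_two (x p : ℝ) : (x ^ 2) ^ (p / 2) = |x| ^ p := by
  rw [← sq_abs, ← rpow_natCast, ← rpow_mul (abs_nonneg x), Nat.cast_ofNat,
    mul_div_cancel₀ p two_ne_zero]

theorem sq_add_mul_sq_rpow_le_of_abs_le {p a b : ℝ} (hp1 : 1 < p) (hp2 : p ≤ 2) (hba : |b| ≤ |a|) :
    (a ^ 2 + (p - 1) * b ^ 2) ^ (p / 2) ≤ (|a + b| ^ p + |a - b| ^ p) / 2 := by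
  rcases eq_or_ne a 0 with rfl | ha
  · obtain rfl : b = 0 := abs_nonpos_iff.1 (by simpa using hba)
    simp [zero_rpow (by linarith : p / 2 ≠ 0), zero_rpow (by linarith : p ≠ 0)]
  obtain ⟨t, ht, rfl⟩ : ∃ t ∈ Icc (-1 : ℝ) 1, b = a * t :=
    ⟨b / a, abs_le.1 (by rw [abs_div]; exact div_le_one_of_le₀ hba (abs_nonneg a)), by field_simp⟩
  have hsum : |a + a * t| = |a| * (1 + t) := by
    rw [← mul_one_add, abs_mul, abs_of_nonneg (a := 1 + t) (by linarith [ht.1])]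
  have hdiff : |a - a * t| = |a| * (1 - t) := by
    rw [← mul_one_sub, abs_mul, abs_of_nonneg (a := 1 - t) (by linarith [ht.2])]
  rw [show a ^ 2 + (p - 1) * (a * t) ^ 2 = a ^ 2 * (1 + (p - 1) * t ^ 2) by ring,
    mul_rpow (sq_nonneg a) (by nlinarith), sq_rpow_div_two, hsum, hdiff,
    mul_rpow (abs_nonneg a) (by linarith [ht.1]), mul_rpow (abs_nonneg a) (by linarith [ht.2]),
    ← mul_add, mul_div_assoc]
  exact mul_le_mul_of_nonneg_left (one_add_mul_sq_rpow_le hp1 hp2 ht) (by positivity)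

theorem sq_add_mul_sq_rpow_le {p : ℝ} (hp1 : 1 < p) (hp2 : p ≤ 2) (a b : ℝ) :
    (a ^ 2 + (p - 1) * b ^ 2) ^ (p / 2) ≤ (|a + b| ^ p + |a - b| ^ p) / 2 := by
  rcases le_total |b| |a| with h | h
  · exact sq_add_mul_sq_rpow_le_of_abs_le hp1 hp2 h
  have hab : a ^ 2 ≤ b ^ 2 := sq_le_sq.2 h
  calc (a ^ 2 + (p - 1) * b ^ 2) ^ (p / 2) ≤ (b ^ 2 + (p - 1) * a ^ 2) ^ (p / 2) :=
        rpow_le_rpow (by nlinarith) (by nlinarith) (by linarith)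
    _ ≤ (|b + a| ^ p + |b - a| ^ p) / 2 := sq_add_mul_sq_rpow_le_of_abs_le hp1 hp2 h
    _ = (|a + b| ^ p + |a - b| ^ p) / 2 := by rw [add_comm b a, abs_sub_comm]

theorem Lp_add_Lp_le_Lp_add_of_le_one {ι : Type*} [Fintype ι] {r : ℝ} (hr0 : 0 < r) (hr1 : r ≤ 1)
    {f g : ι → ℝ} (hf : ∀ i, 0 ≤ f i) (hg : ∀ i, 0 ≤ g i) :
    (∑ i, f i ^ r) ^ (1 / r) + (∑ i, g i ^ r) ^ (1 / r) ≤ (∑ i, (f i + g i) ^ r) ^ (1 / r) := by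
  -- the triangle inequality `‖∑ vᵢ‖ ≤ ∑ ‖vᵢ‖` in `ℓ^{1/r}(ℝ²)` for `vᵢ = (fᵢ ^ r, gᵢ ^ r)`
  set s : ℝ≥0∞ := ENNReal.ofReal (1 / r)
  have hs : s.toReal = 1 / r := ENNReal.toReal_ofReal (by positivity)
  have : Fact (1 ≤ s) := ⟨by simpa [s] using one_le_one_div hr0 hr1⟩
  have hnorm : ∀ a b : ℝ, 0 ≤ a → 0 ≤ b →
      ‖WithLp.toLp s (a ^ r, b ^ r)‖ = (a + b) ^ r := by
    intro a b ha hb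
    rw [WithLp.prod_norm_eq_add (by rw [hs]; positivity), hs]
    simp [abs_of_nonneg, rpow_nonneg, ha, hb, ← rpow_mul, hr0.ne']
  have hF : 0 ≤ ∑ i, f i ^ r := Fintype.sum_nonneg fun i => rpow_nonneg (hf i) r
  have hG : 0 ≤ ∑ i, g i ^ r := Fintype.sum_nonneg fun i => rpow_nonneg (hg i) r
  have hA := rpow_inv_rpow hF hr0.ne'
  have hB := rpow_inv_rpow hG hr0.ne'
  have htri := norm_sum_le Finset.univ fun i => WithLp.toLp s (f i ^ r, g i ^ r)
  rw [← WithLp.toLp_sum, ← prod_mk_sum, ← hA, ← hB,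
    hnorm _ _ (rpow_nonneg hF _) (rpow_nonneg hG _)] at htri
  simp only [hnorm _ _ (hf _) (hg _)] at htri
  rw [one_div, le_rpow_inv_iff_of_pos (add_nonneg (rpow_nonneg hF _) (rpow_nonneg hG _))
    (Fintype.sum_nonneg fun i => rpow_nonneg (add_nonneg (hf i) (hg i)) r) hr0]
  simpa only [one_div] using htri

end Real

open Real

section LpNorm

variable {ι : Type*} [Fintype ι]

noncomputable def lpNormSq (p : ℝ) (v : ι → ℝ) : ℝ := (∑ i, |v i| ^ p) ^ (2 / p)

theorem lpNormSq_nonneg (p : ℝ) (v : ι → ℝ) : 0 ≤ lpNormSq p v :=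
  rpow_nonneg (Fintype.sum_nonneg fun _ => rpow_nonneg (abs_nonneg _) _) _

theorem continuous_lpNormSq {p : ℝ} (hp : 0 < p) : Continuous (lpNormSq p : (ι → ℝ) → ℝ) :=
  (continuous_rpow_const (by positivity)).comp <| continuous_finsetSum _ fun i _ =>
    (continuous_rpow_const hp.le).comp (continuous_apply i).abs

theorem sq_dotProduct_le_lpNormSq_mul_lpNormSq {p q : ℝ} (hpq : p.HolderConjugate q)
    (z v : ι → ℝ) : (z ⬝ᵥ v) ^ 2 ≤ lpNormSq q z * lpNormSq p v := by
  have hholder : |z ⬝ᵥ v| ≤ (∑ i, |z i| ^ q) ^ (1 / q) * (∑ i, |v i| ^ p) ^ (1 / p) := by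
    refine (Finset.abs_sum_le_sum_abs _ _).trans ?_
    simpa [abs_mul] using
      inner_le_Lp_mul_Lq Finset.univ (fun i => |z i|) (fun i => |v i|) hpq.symm
  have hsq (r : ℝ) (w : ι → ℝ) : ((∑ i, |w i| ^ r) ^ (1 / r)) ^ 2 = lpNormSq r w := by
    rw [lpNormSq, ← rpow_natCast,
      ← rpow_mul (Fintype.sum_nonneg fun i => rpow_nonneg (abs_nonneg _) _)]
    ring_nf
  rw [← sq_abs, ← hsq, ← hsq, ← mul_pow]
  exact pow_le_pow_left₀ (abs_nonneg _) hholder 2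

theorem lpNormSq_add_mul_lpNormSq_le_rpow_sum {p : ℝ} (hp1 : 1 < p) (hp2 : p ≤ 2) (u v : ι → ℝ) :
    lpNormSq p u + (p - 1) * lpNormSq p v
      ≤ (∑ i, (u i ^ 2 + (p - 1) * v i ^ 2) ^ (p / 2)) ^ (2 / p) := by
  have h := Lp_add_Lp_le_Lp_add_of_le_one (r := p / 2) (by linarith) (by linarith)
    (f := fun i => u i ^ 2) (g := fun i => (p - 1) * v i ^ 2) (fun i => sq_nonneg _)
    (fun i => mul_nonneg (by linarith) (sq_nonneg _))
  have hS : 0 ≤ ∑ i, |v i| ^ p := Fintype.sum_nonneg fun i => rpow_nonneg (abs_nonneg _) _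
  simp only [mul_rpow (by linarith : 0 ≤ p - 1) (sq_nonneg _), sq_rpow_div_two, ← Finset.mul_sum,
    one_div_div] at h
  rwa [mul_rpow (by positivity) hS, ← rpow_mul (by linarith), div_mul_div_cancel₀ (by linarith),
    div_self (by positivity), rpow_one] at h

theorem lpNormSq_add_mul_lpNormSq_le {p : ℝ} (hp1 : 1 < p) (hp2 : p ≤ 2) (u v : ι → ℝ) :
    lpNormSq p u + (p - 1) * lpNormSq p v ≤ (lpNormSq p (u + v) + lpNormSq p (u - v)) / 2 := by
  have hsum : ∑ i, (u i ^ 2 + (p - 1) * v i ^ 2) ^ (p / 2)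
      ≤ (∑ i, |(u + v) i| ^ p + ∑ i, |(u - v) i| ^ p) / 2 := by
    rw [← Finset.sum_add_distrib, Finset.sum_div]
    exact Finset.sum_le_sum fun i _ => sq_add_mul_sq_rpow_le hp1 hp2 (u i) (v i)
  have hconv := (convexOn_rpow (p := 2 / p) (by rw [le_div_iff₀] <;> linarith)).2
    (mem_Ici.2 (Fintype.sum_nonneg fun i => rpow_nonneg (abs_nonneg ((u + v) i)) p))
    (mem_Ici.2 (Fintype.sum_nonneg fun i => rpow_nonneg (abs_nonneg ((u - v) i)) p))
    (by norm_num : (0 : ℝ) ≤ 1 / 2) (by norm_num : (0 : ℝ) ≤ 1 / 2) (by norm_num)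
  simp only [smul_eq_mul, one_div_mul_eq_div, ← add_div] at hconv
  calc lpNormSq p u + (p - 1) * lpNormSq p v
      ≤ (∑ i, (u i ^ 2 + (p - 1) * v i ^ 2) ^ (p / 2)) ^ (2 / p) :=
        lpNormSq_add_mul_lpNormSq_le_rpow_sum hp1 hp2 u v
    _ ≤ ((∑ i, |(u + v) i| ^ p + ∑ i, |(u - v) i| ^ p) / 2) ^ (2 / p) :=
        rpow_le_rpow (Fintype.sum_nonneg fun i => rpow_nonneg (by nlinarith) _) hsum
          (by positivity)
    _ ≤ ((∑ i, |(u + v) i| ^ p) ^ (2 / p) + (∑ i, |(u - v) i| ^ p) ^ (2 / p)) / 2 := hconv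

end LpNorm

section LeastSquares

variable {Ω ι : Type*} [MeasurableSpace Ω] [Fintype ι] {P : Measure Ω}

theorem integral_sq_add_mul {w u : Ω → ℝ}
    (h : ∀ t : ℝ, Integrable (fun ω => (w ω + t * u ω) ^ 2) P) (t : ℝ) :
    ∫ ω, (w ω + t * u ω) ^ 2 ∂P
      = ∫ ω, w ω ^ 2 ∂P + 2 * t * ∫ ω, w ω * u ω ∂P + t ^ 2 * ∫ ω, u ω ^ 2 ∂P := by
  have hw : Integrable (fun ω => w ω ^ 2) P := by simpa using h 0
  have hu : Integrable (fun ω => u ω ^ 2) P := by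
    have e : (fun ω => u ω ^ 2)
        = fun ω => ((w ω + 1 * u ω) ^ 2 + (w ω + -1 * u ω) ^ 2) / 2 - w ω ^ 2 := by
      ext; ring
    exact e ▸ (((h 1).add (h (-1))).div_const 2).sub hw
  have hwu : Integrable (fun ω => w ω * u ω) P := by
    have e : (fun ω => w ω * u ω) = fun ω => ((w ω + 1 * u ω) ^ 2 - w ω ^ 2 - u ω ^ 2) / 2 := by
      ext; ring
    exact e ▸ (((h 1).sub hw).sub hu).div_const 2
  have hwu' := hwu.const_mul (2 * t)
  have hu' := hu.const_mul (t ^ 2)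
  have hsum : Integrable (fun ω => 2 * t * (w ω * u ω) + t ^ 2 * u ω ^ 2) P := hwu'.add hu'
  calc ∫ ω, (w ω + t * u ω) ^ 2 ∂P
      = ∫ ω, w ω ^ 2 + (2 * t * (w ω * u ω) + t ^ 2 * u ω ^ 2) ∂P := by congr 1; ext; ring
    _ = _ := by
      rw [integral_add hw hsum, integral_add hwu' hu', integral_const_mul,
        integral_const_mul, add_assoc]

variable {x : Ω → ι → ℝ} {y : Ω → ℝ}

theorem dotProduct_add_smul_sub (x a v : ι → ℝ) (y t : ℝ) :
    x ⬝ᵥ (a + t • v) - y = (x ⬝ᵥ a - y) + t * x ⬝ᵥ v := by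
  rw [dotProduct_add, dotProduct_smul, smul_eq_mul]
  ring

theorem integral_sq_dotProduct_add_smul_sub
    (hfint : ∀ θ, Integrable (fun ω => (x ω ⬝ᵥ θ - y ω) ^ 2) P) (a v : ι → ℝ) (t : ℝ) :
    ∫ ω, (x ω ⬝ᵥ (a + t • v) - y ω) ^ 2 ∂P
      = ∫ ω, (x ω ⬝ᵥ a - y ω) ^ 2 ∂P + 2 * t * ∫ ω, (x ω ⬝ᵥ a - y ω) * x ω ⬝ᵥ v ∂P
        + t ^ 2 * ∫ ω, (x ω ⬝ᵥ v) ^ 2 ∂P := by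
  simp only [dotProduct_add_smul_sub]
  exact integral_sq_add_mul
    (fun s => by simpa only [dotProduct_add_smul_sub] using hfint (a + s • v)) t

theorem integral_sq_dotProduct_le {p q : ℝ} (hpq : p.HolderConjugate q)
    (hxq : Integrable (fun ω => lpNormSq q (x ω)) P) (v : ι → ℝ) :
    ∫ ω, (x ω ⬝ᵥ v) ^ 2 ∂P ≤ (∫ ω, lpNormSq q (x ω) ∂P) * lpNormSq p v := by
  rw [← integral_mul_const]
  exact integral_mono_of_nonneg (ae_of_all _ fun _ => sq_nonneg _) (hxq.mul_const _)
    (ae_of_all _ fun ω => sq_dotProduct_le_lpNormSq_mul_lpNormSq hpq (x ω) v)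

theorem integral_sq_dotProduct_sub_parallelogram
    (hfint : ∀ θ, Integrable (fun ω => (x ω ⬝ᵥ θ - y ω) ^ 2) P) (u v : ι → ℝ) :
    ∫ ω, (x ω ⬝ᵥ (u + v) - y ω) ^ 2 ∂P + ∫ ω, (x ω ⬝ᵥ (u - v) - y ω) ^ 2 ∂P
      = 2 * ∫ ω, (x ω ⬝ᵥ u - y ω) ^ 2 ∂P + 2 * ∫ ω, (x ω ⬝ᵥ v) ^ 2 ∂P := by
  have hadd := integral_sq_dotProduct_add_smul_sub hfint u v 1
  have hsub := integral_sq_dotProduct_add_smul_sub hfint u v (-1)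
  rw [one_smul] at hadd
  rw [neg_one_smul, ← sub_eq_add_neg] at hsub
  rw [hadd, hsub]
  ring

end LeastSquares

theorem stmt_16_general {d : ℕ} {Ω : Type*} [MeasurableSpace Ω]
    (P : Measure Ω)
    (x : Ω → Fin d → ℝ) (y : Ω → ℝ)
    (p q : ℝ) (hp1 : 1 < p) (hp2 : p ≤ 2) (hpq : 1 / p + 1 / q = 1)
    (hxq : Integrable (fun ω => (∑ i, |x ω i| ^ q) ^ (2 / q)) P)
    (hfint : ∀ θ : Fin d → ℝ, Integrable (fun ω => (x ω ⬝ᵥ θ - y ω) ^ 2) P)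
    (γ : ℝ) (hγ0 : 0 ≤ γ)
    (hγ : γ * ∫ ω, (∑ i, |x ω i| ^ q) ^ (2 / q) ∂P ≤ 1) :
    ConvexOn ℝ Set.univ (fun θ : Fin d → ℝ =>
      (∑ i, |θ i| ^ p) ^ (2 / p) / (2 * (p - 1))
        - γ * (1 / 2 * ∫ ω, (x ω ⬝ᵥ θ - y ω) ^ 2 ∂P)) := by
  show ConvexOn ℝ Set.univ fun θ => lpNormSq p θ / (2 * (p - 1))
    - γ * (1 / 2 * ∫ ω, (x ω ⬝ᵥ θ - y ω) ^ 2 ∂P)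
  have hpq' : p.HolderConjugate q :=
    Real.holderConjugate_iff.2 ⟨hp1, by simpa only [one_div] using hpq⟩
  have hγ' : γ * ∫ ω, lpNormSq q (x ω) ∂P ≤ 1 := hγ
  refine convexOn_univ_of_le_add_sub_div_two (fun a v => ?_) (fun u v => ?_)
  · simp only [integral_sq_dotProduct_add_smul_sub hfint a v]
    exact (((continuous_lpNormSq (by linarith)).comp (by fun_prop)).div_const _).sub
      (by fun_prop)
  have hN := div_le_div_of_nonneg_right (lpNormSq_add_mul_lpNormSq_le hp1 hp2 u v)
    (by linarith : (0 : ℝ) ≤ 2 * (p - 1))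
  have hhalf : (p - 1) * lpNormSq p v / (2 * (p - 1)) = lpNormSq p v / 2 := by
    field_simp [(by linarith : p - 1 ≠ 0)]
  have hγQ : γ * ∫ ω, (x ω ⬝ᵥ v) ^ 2 ∂P ≤ lpNormSq p v :=
    calc γ * ∫ ω, (x ω ⬝ᵥ v) ^ 2 ∂P
        ≤ γ * ((∫ ω, lpNormSq q (x ω) ∂P) * lpNormSq p v) :=
          mul_le_mul_of_nonneg_left (integral_sq_dotProduct_le hpq' hxq v) hγ0
      _ ≤ lpNormSq p v := by
          rw [← mul_assoc]; exact mul_le_of_le_one_left (lpNormSq_nonneg p v) hγ'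
  have hpar := integral_sq_dotProduct_sub_parallelogram hfint u v
  linear_combination hN - hhalf + hγQ / 2 + γ / 4 * hpar

/-- `ℓ_p` step-size bound for least-squares: with
`f(θ) = ½E(⟨x,θ⟩ − y)²`, `h(θ) = ‖θ‖_p²/(2(p−1))`, `1/p + 1/q = 1`,
`h − γf` is convex for any `γ ≤ 1/E‖x‖_q²`. -/
theorem stmt_16 {d : ℕ} {Ω : Type*} [MeasurableSpace Ω]
    (P : Measure Ω) [IsProbabilityMeasure P]
    (x : Ω → Fin d → ℝ) (y : Ω → ℝ)
    (p q : ℝ) (hp1 : 1 < p) (hp2 : p ≤ 2) (hpq : 1 / p + 1 / q = 1)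
    (hxq : Integrable (fun ω => (∑ i, |x ω i| ^ q) ^ (2 / q)) P)
    (hfint : ∀ θ : Fin d → ℝ, Integrable (fun ω => (x ω ⬝ᵥ θ - y ω) ^ 2) P)
    (γ : ℝ) (hγ0 : 0 ≤ γ)
    (hγ : γ * ∫ ω, (∑ i, |x ω i| ^ q) ^ (2 / q) ∂P ≤ 1) :
    ConvexOn ℝ Set.univ (fun θ : Fin d → ℝ =>
      (∑ i, |θ i| ^ p) ^ (2 / p) / (2 * (p - 1))
        - γ * (1 / 2 * ∫ ω, (x ω ⬝ᵥ θ - y ω) ^ 2 ∂P)) :=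
  stmt_16_general P x y p q hp1 hp2 hpq hxq hfint γ hγ0 hγ
end

section
/- Kurtosis implies fourth-moment operator bound: if a random vector x in ℝ^d with covariance Σ = E[x⊗x] satisfies E⟨z,x⟩⁴ ≤ κ⟨z,Σz⟩² for all z ∈ ℝ^d, then for all symmetric positive semidefinite matrices M, N, E[⟨x,Mx⟩⟨x,Nx⟩] ≤ κ tr(MΣ) tr(NΣ); in particular E[⟨x,Mx⟩ x⊗x] ⪯ κ tr(MΣ) Σ. -/
open Matrix MeasureTheory

/-!
Write `M = Bᴴ B` and `N = Cᴴ C`. Then `⟨x, M x⟩ ⟨x, N x⟩ = ∑ᵢ ∑ⱼ ⟨bᵢ, x⟩² ⟨cⱼ, x⟩²` over the rows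
`bᵢ` of `B` and `cⱼ` of `C`, while `tr (M Σ) tr (N Σ) = ∑ᵢ ∑ⱼ ⟨bᵢ, Σ bᵢ⟩ ⟨cⱼ, Σ cⱼ⟩`, so it suffices
to compare the terms. For these, Cauchy–Schwarz and the kurtosis bound give
`E[⟨u, x⟩² ⟨v, x⟩²] ≤ √(E⟨u, x⟩⁴ E⟨v, x⟩⁴) ≤ κ ⟨u, Σ u⟩ ⟨v, Σ v⟩`.
The operator bound is the case `N = z zᵀ`.
-/

namespace Matrix

variable {m n : Type*} [Fintype m] [Fintype n]

lemma dotProduct_conjTranspose_mul_self_mulVec (B : Matrix m n ℝ) (y : n → ℝ) :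
    y ⬝ᵥ (Bᴴ * B) *ᵥ y = ∑ i, (B i ⬝ᵥ y) ^ 2 := by
  rw [← mulVec_mulVec, dotProduct_mulVec, conjTranspose_eq_transpose_of_trivial,
    vecMul_transpose]
  simp only [dotProduct, mulVec, sq]

lemma trace_conjTranspose_mul_self_mul (B : Matrix m n ℝ) (S : Matrix n n ℝ) :
    (Bᴴ * B * S).trace = ∑ i, B i ⬝ᵥ S *ᵥ B i := by
  rw [Matrix.mul_assoc, trace_mul_comm]
  simp only [trace, diag, mul_apply, conjTranspose_apply, star_trivial, dotProduct, mulVec,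
    Finset.mul_sum, Finset.sum_mul]
  refine Finset.sum_congr rfl fun i _ => ?_
  rw [Finset.sum_comm]
  exact Finset.sum_congr rfl fun _ _ => Finset.sum_congr rfl fun _ _ => by ring

lemma dotProduct_vecMulVec_self_mulVec (z y : n → ℝ) :
    y ⬝ᵥ vecMulVec z z *ᵥ y = (z ⬝ᵥ y) ^ 2 := by
  rw [vecMulVec_mulVec, op_smul_eq_smul, dotProduct_smul, smul_eq_mul, dotProduct_comm, sq]

lemma trace_vecMulVec_self_mul (z : n → ℝ) (S : Matrix n n ℝ) :
    (vecMulVec z z * S).trace = z ⬝ᵥ S *ᵥ z := by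
  rw [vecMulVec_mul, trace_vecMulVec, dotProduct_comm, dotProduct_mulVec]

lemma PosSemidef.exists_eq_conjTranspose_mul_self [DecidableEq n] {M : Matrix n n ℝ}
    (hM : M.PosSemidef) : ∃ B : Matrix n n ℝ, M = Bᴴ * B := by
  open scoped MatrixOrder in
  exact CStarAlgebra.nonneg_iff_eq_star_mul_self.mp hM.nonneg

end Matrix

instance : ENNReal.HolderTriple 4 4 2 where
  inv_add_inv_eq_inv := by
    rw [show (4 : ENNReal) = 2 * 2 by norm_num, ENNReal.mul_inv (by simp) (by simp), ← add_mul,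
      ENNReal.inv_two_add_inv_two, one_mul]

namespace MeasureTheory

variable {α : Type*} [MeasurableSpace α] {μ : Measure α}

lemma MemLp.sq_of_four {f : α → ℝ} (hf : MemLp f 4 μ) : MemLp (fun a => f a ^ 2) 2 μ := by
  simp only [sq]
  exact hf.mul hf

lemma integral_mul_le_sqrt_mul_sqrt {f g : α → ℝ} (hf₀ : 0 ≤ᵐ[μ] f) (hg₀ : 0 ≤ᵐ[μ] g)
    (hf : MemLp f 2 μ) (hg : MemLp g 2 μ) :
    ∫ a, f a * g a ∂μ ≤ √(∫ a, f a ^ 2 ∂μ) * √(∫ a, g a ^ 2 ∂μ) := by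
  have := integral_mul_le_Lp_mul_Lq_of_nonneg Real.HolderConjugate.two_two hf₀ hg₀
    (by rwa [ENNReal.ofReal_ofNat]) (by rwa [ENNReal.ofReal_ofNat])
  simpa only [Real.rpow_two, ← Real.sqrt_eq_rpow] using this

lemma integral_sq_mul_sq_le_of_kurtosis {f g : α → ℝ} (hf : MemLp f 4 μ) (hg : MemLp g 4 μ)
    {κ : ℝ} (hκ : 0 ≤ κ) (hf₄ : ∫ a, f a ^ 4 ∂μ ≤ κ * (∫ a, f a ^ 2 ∂μ) ^ 2)
    (hg₄ : ∫ a, g a ^ 4 ∂μ ≤ κ * (∫ a, g a ^ 2 ∂μ) ^ 2) :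
    ∫ a, f a ^ 2 * g a ^ 2 ∂μ ≤ κ * (∫ a, f a ^ 2 ∂μ) * ∫ a, g a ^ 2 ∂μ := by
  have h4 : ∀ h : α → ℝ, ∫ a, (h a ^ 2) ^ 2 ∂μ = ∫ a, h a ^ 4 ∂μ := fun h => by
    simp only [← pow_mul]
  calc ∫ a, f a ^ 2 * g a ^ 2 ∂μ
      ≤ √(∫ a, f a ^ 4 ∂μ) * √(∫ a, g a ^ 4 ∂μ) := by
        rw [← h4 f, ← h4 g]
        exact integral_mul_le_sqrt_mul_sqrt (.of_forall fun _ => sq_nonneg _)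
          (.of_forall fun _ => sq_nonneg _) hf.sq_of_four hg.sq_of_four
    _ ≤ √(κ * (∫ a, f a ^ 2 ∂μ) ^ 2) * √(κ * (∫ a, g a ^ 2 ∂μ) ^ 2) := by gcongr
    _ = κ * (∫ a, f a ^ 2 ∂μ) * ∫ a, g a ^ 2 ∂μ := by
        have hf₂ : 0 ≤ ∫ a, f a ^ 2 ∂μ := integral_nonneg fun _ => sq_nonneg _
        have hg₂ : 0 ≤ ∫ a, g a ^ 2 ∂μ := integral_nonneg fun _ => sq_nonneg _
        rw [Real.sqrt_mul hκ, Real.sqrt_mul hκ, Real.sqrt_sq hf₂, Real.sqrt_sq hg₂]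
        linear_combination (∫ a, f a ^ 2 ∂μ) * (∫ a, g a ^ 2 ∂μ) * Real.mul_self_sqrt hκ

section RandomVector

variable {ι Ω : Type*} [Fintype ι] [MeasurableSpace Ω] {P : Measure Ω} {x : Ω → ι → ℝ}

lemma memLp_dotProduct {p : ENNReal} (hx : ∀ i, MemLp (fun ω => x ω i) p P) (u : ι → ℝ) :
    MemLp (fun ω => u ⬝ᵥ x ω) p P := by
  simpa only [dotProduct] using memLp_finsetSum Finset.univ fun i _ => (hx i).const_mul (u i)

lemma integral_sq_dotProduct {Sig : Matrix ι ι ℝ} (hx : ∀ i, MemLp (fun ω => x ω i) 2 P)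
    (hSig : ∀ i j, Sig i j = ∫ ω, x ω i * x ω j ∂P) (u : ι → ℝ) :
    ∫ ω, (u ⬝ᵥ x ω) ^ 2 ∂P = u ⬝ᵥ Sig *ᵥ u := by
  have hint : ∀ i j, Integrable (fun ω => u i * u j * (x ω i * x ω j)) P := fun i j =>
    ((hx i).integrable_mul (hx j)).const_mul _
  calc ∫ ω, (u ⬝ᵥ x ω) ^ 2 ∂P = ∫ ω, ∑ i, ∑ j, u i * u j * (x ω i * x ω j) ∂P := by
        refine integral_congr_ae (.of_forall fun ω => ?_)
        simp only [sq, dotProduct, Finset.sum_mul_sum]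
        exact Finset.sum_congr rfl fun _ _ => Finset.sum_congr rfl fun _ _ => by ring
    _ = ∑ i, ∑ j, u i * u j * Sig i j := by
        rw [integral_finsetSum _ fun i _ => integrable_finsetSum _ fun j _ => hint i j]
        refine Finset.sum_congr rfl fun i _ => ?_
        rw [integral_finsetSum _ fun j _ => hint i j]
        exact Finset.sum_congr rfl fun j _ => by rw [integral_const_mul, hSig]
    _ = u ⬝ᵥ Sig *ᵥ u := by
        simp only [dotProduct, mulVec, Finset.mul_sum]
        exact Finset.sum_congr rfl fun _ _ => Finset.sum_congr rfl fun _ _ => by ring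

lemma integral_quadForm_mul_quadForm_le [IsFiniteMeasure P] {Sig : Matrix ι ι ℝ} {κ : ℝ}
    (hx : ∀ i, MemLp (fun ω => x ω i) 4 P) (hSig : ∀ i j, Sig i j = ∫ ω, x ω i * x ω j ∂P)
    (hκ : 0 ≤ κ) (hkurt : ∀ z, ∫ ω, (z ⬝ᵥ x ω) ^ 4 ∂P ≤ κ * (z ⬝ᵥ Sig *ᵥ z) ^ 2)
    {m n : Type*} [Fintype m] [Fintype n] (B : Matrix m ι ℝ) (C : Matrix n ι ℝ) :
    ∫ ω, (x ω ⬝ᵥ (Bᴴ * B) *ᵥ x ω) * (x ω ⬝ᵥ (Cᴴ * C) *ᵥ x ω) ∂P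
      ≤ κ * (Bᴴ * B * Sig).trace * (Cᴴ * C * Sig).trace := by
  have hσ : ∀ z, ∫ ω, (z ⬝ᵥ x ω) ^ 2 ∂P = z ⬝ᵥ Sig *ᵥ z :=
    integral_sq_dotProduct (fun i => (hx i).mono_exponent (by norm_num)) hSig
  have hrank1 : ∀ u v, ∫ ω, (u ⬝ᵥ x ω) ^ 2 * (v ⬝ᵥ x ω) ^ 2 ∂P
      ≤ κ * ((u ⬝ᵥ Sig *ᵥ u) * (v ⬝ᵥ Sig *ᵥ v)) := fun u v => by
    rw [← mul_assoc]
    simpa only [hσ] using integral_sq_mul_sq_le_of_kurtosis (memLp_dotProduct hx u)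
      (memLp_dotProduct hx v) hκ (by simpa only [hσ] using hkurt u)
      (by simpa only [hσ] using hkurt v)
  have hint : ∀ u v, Integrable (fun ω => (u ⬝ᵥ x ω) ^ 2 * (v ⬝ᵥ x ω) ^ 2) P := fun u v =>
    (memLp_dotProduct hx u).sq_of_four.integrable_mul (memLp_dotProduct hx v).sq_of_four
  rw [mul_assoc κ]
  simp only [dotProduct_conjTranspose_mul_self_mulVec, trace_conjTranspose_mul_self_mul,
    Finset.sum_mul, Finset.mul_sum]
  rw [integral_finsetSum _ fun j _ => integrable_finsetSum _ fun i _ => hint (B i) (C j)]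
  refine Finset.sum_le_sum fun j _ => ?_
  rw [integral_finsetSum _ fun i _ => hint (B i) (C j)]
  exact Finset.sum_le_sum fun i _ => hrank1 (B i) (C j)

end RandomVector

end MeasureTheory

theorem stmt_17_general {d : ℕ} {Ω : Type*} [MeasurableSpace Ω]
    (P : Measure Ω) [IsProbabilityMeasure P]
    (x : Ω → Fin d → ℝ)
    (hx4 : ∀ i, MemLp (fun ω => x ω i) 4 P)
    (Sig : Matrix (Fin d) (Fin d) ℝ)
    (hSig : ∀ i j, Sig i j = ∫ ω, x ω i * x ω j ∂P)
    (κ : ℝ) (hκ : 0 < κ)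
    (hkurt : ∀ z : Fin d → ℝ, ∫ ω, (z ⬝ᵥ x ω) ^ 4 ∂P ≤ κ * (z ⬝ᵥ Sig.mulVec z) ^ 2) :
    (∀ M N : Matrix (Fin d) (Fin d) ℝ, M.PosSemidef → N.PosSemidef →
      ∫ ω, (x ω ⬝ᵥ M.mulVec (x ω)) * (x ω ⬝ᵥ N.mulVec (x ω)) ∂P
        ≤ κ * (M * Sig).trace * (N * Sig).trace)
    ∧ ∀ M : Matrix (Fin d) (Fin d) ℝ, M.PosSemidef → ∀ z : Fin d → ℝ,
      ∫ ω, (x ω ⬝ᵥ M.mulVec (x ω)) * (z ⬝ᵥ x ω) ^ 2 ∂P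
        ≤ κ * (M * Sig).trace * (z ⬝ᵥ Sig.mulVec z) := by
  have hMN : ∀ M N : Matrix (Fin d) (Fin d) ℝ, M.PosSemidef → N.PosSemidef →
      ∫ ω, (x ω ⬝ᵥ M *ᵥ x ω) * (x ω ⬝ᵥ N *ᵥ x ω) ∂P ≤ κ * (M * Sig).trace * (N * Sig).trace := by
    intro M N hM hN
    obtain ⟨B, rfl⟩ := hM.exists_eq_conjTranspose_mul_self
    obtain ⟨C, rfl⟩ := hN.exists_eq_conjTranspose_mul_self
    exact integral_quadForm_mul_quadForm_le hx4 hSig hκ.le hkurt B C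
  refine ⟨hMN, fun M hM z => ?_⟩
  have hz : (vecMulVec z z).PosSemidef := by
    simpa only [star_trivial] using posSemidef_vecMulVec_self_star z
  simpa only [dotProduct_vecMulVec_self_mulVec, trace_vecMulVec_self_mul] using hMN M _ hM hz

/-- Kurtosis implies fourth-moment operator bound:
`E⟨z,x⟩⁴ ≤ κ⟨z,Σz⟩²` for all `z` implies
`E[⟨x,Mx⟩⟨x,Nx⟩] ≤ κ tr(MΣ) tr(NΣ)` for psd `M, N`, and in particular
`E[⟨x,Mx⟩ x⊗x] ⪯ κ tr(MΣ) Σ`. -/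
theorem stmt_17 {d : ℕ} {Ω : Type*} [MeasurableSpace Ω]
    (P : Measure Ω) [IsProbabilityMeasure P]
    (x : Ω → Fin d → ℝ)
    (hxmeas : ∀ i, AEStronglyMeasurable (fun ω => x ω i) P)
    (hx4 : ∀ i, MemLp (fun ω => x ω i) 4 P)
    (Sig : Matrix (Fin d) (Fin d) ℝ)
    (hSig : ∀ i j, Sig i j = ∫ ω, x ω i * x ω j ∂P)
    (κ : ℝ) (hκ : 0 < κ)
    (hkurt : ∀ z : Fin d → ℝ, ∫ ω, (z ⬝ᵥ x ω) ^ 4 ∂P ≤ κ * (z ⬝ᵥ Sig.mulVec z) ^ 2) :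
    (∀ M N : Matrix (Fin d) (Fin d) ℝ, M.PosSemidef → N.PosSemidef →
      ∫ ω, (x ω ⬝ᵥ M.mulVec (x ω)) * (x ω ⬝ᵥ N.mulVec (x ω)) ∂P
        ≤ κ * (M * Sig).trace * (N * Sig).trace)
    ∧ ∀ M : Matrix (Fin d) (Fin d) ℝ, M.PosSemidef → ∀ z : Fin d → ℝ,
      ∫ ω, (x ω ⬝ᵥ M.mulVec (x ω)) * (z ⬝ᵥ x ω) ^ 2 ∂P
        ≤ κ * (M * Sig).trace * (z ⬝ᵥ Sig.mulVec z) :=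
  stmt_17_general P x hx4 Sig hSig κ hκ hkurt
end
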